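/- arXiv:2401.10971 — 2 statements merged into one kernel-verified Lean document; each statement's English description precedes it below -/
import Mathlib

section
/- There exists a simple graph on 21 vertices that is 10-regular and triangle-distinct. -/
/-- The triangle-degree of a vertex `v` of a simple graph `G`: the number of triangles
(3-cliques) of `G` that contain `v`. -/
noncomputable def triangleDegree {V : Type*} (G : SimpleGraph V) (v : V) : ℕ :=
  {s | s ∈ G.cliqueSet 3 ∧ v ∈ s}.ncard

/-- A simple graph is triangle-distinct if all its vertices have pairwise distinct
triangle-degrees. -/
def TriangleDistinct {V : Type*} (G : SimpleGraph V) : Prop :=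
  Function.Injective (triangleDegree G)

/-- adjacency bitmasks (placeholder: circulant) -/
def adjN : Fin 21 → ℕ :=
  ![516520, 1597012, 1735178, 361957, 1993346, 748169, 1989130, 369977, 516745, 1607030, 748170, 1610870, 1927238, 300469, 1054071, 469897, 431529, 1148277, 111065, 1056374, 678486]

def adjB (i j : Fin 21) : Bool := (adjN i).testBit j

lemma adjB_symm : ∀ i j : Fin 21, adjB i j = adjB j i := by decide
lemma adjB_irrefl : ∀ i : Fin 21, adjB i i = false := by decide

def myG : SimpleGraph (Fin 21) where
  Adj i j := adjB i j = true
  symm := by constructor; intro i j h; rw [adjB_symm]; exact h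
  loopless := by constructor; intro i h; rw [adjB_irrefl] at h; exact Bool.false_ne_true h

instance : DecidableRel myG.Adj := fun i j => inferInstanceAs (Decidable (adjB i j = true))

def tcount (v : Fin 21) : ℕ :=
  ((Finset.univ : Finset (Fin 21 × Fin 21)).filter
    (fun p => p.1 < p.2 ∧ adjB v p.1 ∧ adjB v p.2 ∧ adjB p.1 p.2)).card

lemma triangleDegree_eq (v : Fin 21) : triangleDegree myG v = tcount v := by
  classical
  have himg : {s | s ∈ myG.cliqueSet 3 ∧ v ∈ s} =
      (fun p : Fin 21 × Fin 21 => ({v, p.1, p.2} : Finset (Fin 21))) ''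
        ↑((Finset.univ : Finset (Fin 21 × Fin 21)).filter
          (fun p => p.1 < p.2 ∧ adjB v p.1 ∧ adjB v p.2 ∧ adjB p.1 p.2)) := by
    ext s
    simp only [Set.mem_image, Finset.coe_filter, Set.mem_setOf_eq, Finset.mem_univ, true_and,
      SimpleGraph.mem_cliqueSet_iff]
    constructor
    · rintro ⟨hs, hv⟩
      rw [SimpleGraph.is3Clique_iff] at hs
      obtain ⟨a, b, c, hab, hac, hbc, rfl⟩ := hs
      -- v is one of a, b, c; extract the other two x < y
      have hv' : v = a ∨ v = b ∨ v = c := by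
        simpa using hv
      have key : ∃ x y : Fin 21, myG.Adj v x ∧ myG.Adj v y ∧ myG.Adj x y ∧
          ({a, b, c} : Finset (Fin 21)) = {v, x, y} := by
        rcases hv' with rfl | rfl | rfl
        · exact ⟨b, c, hab, hac, hbc, rfl⟩
        · refine ⟨a, c, hab.symm, hbc, hac, ?_⟩
          ext z; simp; tauto
        · refine ⟨a, b, hac.symm, hbc.symm, hab, ?_⟩
          ext z; simp; tauto
      obtain ⟨x, y, hvx, hvy, hxy, hset⟩ := key
      rcases lt_or_gt_of_ne hxy.ne with h | h
      · exact ⟨(x, y), ⟨h, hvx, hvy, hxy⟩, hset.symm⟩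
      · refine ⟨(y, x), ⟨h, hvy, hvx, hxy.symm⟩, ?_⟩
        rw [hset]; ext z; simp; tauto
    · rintro ⟨⟨x, y⟩, ⟨hlt, hvx, hvy, hxy⟩, rfl⟩
      have hvx' : myG.Adj v x := hvx
      have hvy' : myG.Adj v y := hvy
      have hxy' : myG.Adj x y := hxy
      refine ⟨?_, ?_⟩
      · rw [SimpleGraph.is3Clique_triple_iff]
        exact ⟨hvx', hvy', hxy'⟩
      · simp
  have hinj : Set.InjOn (fun p : Fin 21 × Fin 21 => ({v, p.1, p.2} : Finset (Fin 21)))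
      ↑((Finset.univ : Finset (Fin 21 × Fin 21)).filter
        (fun p => p.1 < p.2 ∧ adjB v p.1 ∧ adjB v p.2 ∧ adjB p.1 p.2)) := by
    rintro ⟨x, y⟩ hp ⟨x', y'⟩ hq h
    simp only [Finset.coe_filter, Set.mem_setOf_eq, Finset.mem_univ, true_and] at hp hq
    obtain ⟨hlt, hvx, hvy, -⟩ := hp
    obtain ⟨hlt', hvx', hvy', -⟩ := hq
    have hx : x ≠ v := fun h' => by subst h'; exact (myG : SimpleGraph _).irrefl hvx
    have hy : y ≠ v := fun h' => by subst h'; exact (myG : SimpleGraph _).irrefl hvy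
    have hx' : x' ≠ v := fun h' => by subst h'; exact (myG : SimpleGraph _).irrefl hvx'
    have hy' : y' ≠ v := fun h' => by subst h'; exact (myG : SimpleGraph _).irrefl hvy'
    have hmem : ∀ z : Fin 21, (z = v ∨ z = x ∨ z = y) ↔ (z = v ∨ z = x' ∨ z = y') := by
      intro z
      have := Finset.ext_iff.mp h z
      simpa using this
    have hxm : x = x' ∨ x = y' := by
      have := (hmem x).mp (Or.inr (Or.inl rfl))
      tauto
    have hym : y = x' ∨ y = y' := by
      have := (hmem y).mp (Or.inr (Or.inr rfl))
      tauto
    have hxm' : x' = x ∨ x' = y := by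
      have := (hmem x').mpr (Or.inr (Or.inl rfl))
      tauto
    have hym' : y' = x ∨ y' = y := by
      have := (hmem y').mpr (Or.inr (Or.inr rfl))
      tauto
    have : x = x' ∧ y = y' := by
      rcases hxm with rfl | rfl
      · rcases hym with h1 | h1
        · exact ((lt_irrefl x) (h1 ▸ hlt)).elim
        · exact ⟨rfl, h1⟩
      · rcases hym with h1 | h1
        · exact absurd (show y < x by rw [h1]; exact hlt') (lt_asymm hlt)
        · exact ((lt_irrefl x) (h1 ▸ hlt)).elim
    exact Prod.ext this.1 this.2
  rw [triangleDegree, himg, Set.ncard_image_of_injOn hinj, Set.ncard_coe_finset, tcount]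

lemma myG_regular : myG.IsRegularOfDegree 10 := by
  intro v
  rw [← SimpleGraph.card_neighborFinset_eq_degree]
  revert v; decide

lemma tcount_inj : Function.Injective tcount :=
  List.nodup_ofFn.mp (by decide)

open scoped Classical in
/-- There exists a simple graph on 21 vertices that is 10-regular and triangle-distinct. -/
theorem exists_regular_triangle_distinct_21_10 :
    ∃ G : SimpleGraph (Fin 21), G.IsRegularOfDegree 10 ∧ TriangleDistinct G := by
  refine ⟨myG, ?_, ?_⟩
  · intro v
    have h := myG_regular v
    convert h using 2
  · intro a b h
    apply tcount_inj
    rw [← triangleDegree_eq, ← triangleDegree_eq]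
    exact h
end

section
/- If G is an r-regular simple graph on n vertices that is triangle-distinct, then its complement Ḡ is also triangle-distinct (and Ḡ is (n−1−r)-regular). -/
open Finset

open scoped Classical

section Aux

variable {V : Type*} [Fintype V]

private lemma tri_card (H : SimpleGraph V) (v : V) :
    triangleDegree H v
      = (univ.filter (fun s : Finset V => H.IsNClique 3 s ∧ v ∈ s)).card := by
  have h : {s | s ∈ H.cliqueSet 3 ∧ v ∈ s}
      = ↑(univ.filter (fun s : Finset V => H.IsNClique 3 s ∧ v ∈ s)) := by
    ext s
    simp [SimpleGraph.mem_cliqueSet_iff]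
  rw [triangleDegree, h, Set.ncard_coe_finset]

private lemma two_mul_tri (H : SimpleGraph V) (v : V) :
    2 * triangleDegree H v
      = ((univ : Finset (V × V)).filter
          (fun p => H.Adj v p.1 ∧ H.Adj v p.2 ∧ H.Adj p.1 p.2)).card := by
  set P := ((univ : Finset (V × V)).filter
      (fun p => H.Adj v p.1 ∧ H.Adj v p.2 ∧ H.Adj p.1 p.2)) with hP
  set T := (univ.filter (fun s : Finset V => H.IsNClique 3 s ∧ v ∈ s)) with hT
  have hmap : ∀ p ∈ P, (insert v {p.1, p.2} : Finset V) ∈ T := by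
    intro p hp
    simp only [hP, mem_filter, mem_univ, true_and] at hp
    obtain ⟨h1, h2, h3⟩ := hp
    simp only [hT, mem_filter, mem_univ, true_and]
    exact ⟨SimpleGraph.is3Clique_triple_iff.2 ⟨h1, h2, h3⟩, by simp⟩
  have hcard := Finset.card_eq_sum_card_fiberwise hmap
  have hfiber : ∀ s ∈ T, (P.filter (fun p => (insert v {p.1, p.2} : Finset V) = s)).card = 2 := by
    intro s hs
    simp only [hT, mem_filter, mem_univ, true_and] at hs
    obtain ⟨hs3, hvs⟩ := hs
    rw [SimpleGraph.is3Clique_iff] at hs3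
    obtain ⟨a, b, c, hab, hac, hbc, rfl⟩ := hs3
    have hv : v = a ∨ v = b ∨ v = c := by simpa using hvs
    obtain ⟨u, w, hvu, hvw, huw, hsEq⟩ :
        ∃ u w, H.Adj v u ∧ H.Adj v w ∧ H.Adj u w ∧ ({a, b, c} : Finset V) = {v, u, w} := by
      rcases hv with rfl | rfl | rfl
      · exact ⟨b, c, hab, hac, hbc, rfl⟩
      · exact ⟨a, c, hab.symm, hbc, hac, by ext x; simp; tauto⟩
      · exact ⟨a, b, hac.symm, hbc.symm, hab, by ext x; simp; tauto⟩
    have hset : (P.filter (fun p => (insert v {p.1, p.2} : Finset V) = ({a, b, c} : Finset V)))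
        = ({(u, w), (w, u)} : Finset (V × V)) := by
      ext p
      simp only [mem_filter, hP, mem_univ, true_and, mem_insert, mem_singleton]
      constructor
      · rintro ⟨⟨h1, h2, h3⟩, heq⟩
        rw [hsEq] at heq
        have hp1 : p.1 = u ∨ p.1 = w := by
          have hm : p.1 ∈ ({v, u, w} : Finset V) := heq ▸ (by simp)
          simp only [mem_insert, mem_singleton] at hm
          rcases hm with h | h | h
          · exact absurd h h1.ne'
          · exact Or.inl h
          · exact Or.inr h
        have hp2 : p.2 = u ∨ p.2 = w := by
          have hm : p.2 ∈ ({v, u, w} : Finset V) := heq ▸ (by simp)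
          simp only [mem_insert, mem_singleton] at hm
          rcases hm with h | h | h
          · exact absurd h h2.ne'
          · exact Or.inl h
          · exact Or.inr h
        have hne : p.1 ≠ p.2 := h3.ne
        rcases hp1 with h | h <;> rcases hp2 with h' | h'
        · exact absurd (h.trans h'.symm) hne
        · exact Or.inl (Prod.ext h h')
        · exact Or.inr (Prod.ext h h')
        · exact absurd (h.trans h'.symm) hne
      · rintro (rfl | rfl)
        · exact ⟨⟨hvu, hvw, huw⟩, hsEq.symm⟩
        · refine ⟨⟨hvw, hvu, huw.symm⟩, ?_⟩
          rw [hsEq]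
          ext x; simp; tauto
    rw [hset, card_insert_of_notMem (by simp [huw.ne]), card_singleton]
  rw [hcard, Finset.sum_congr rfl hfiber, Finset.sum_const, smul_eq_mul, tri_card, mul_comm]

private lemma key_eq (H : SimpleGraph V) (r : ℕ) (hreg : H.IsRegularOfDegree r) (v : V) :
    2 * triangleDegree H v + 2 * triangleDegree Hᶜ v
        + ((Fintype.card V - 2) * r + 2 * ((Fintype.card V - 1) * r) + r)
      = (Fintype.card V - 1) * (Fintype.card V - 2) + 3 * (r * r) := by
  set n := Fintype.card V with hn
  set E := (univ : Finset V).erase v with hEdef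
  have hvE : v ∉ E := notMem_erase _ _
  have hEcard : E.card = n - 1 := by
    rw [hEdef, card_erase_of_mem (mem_univ v), card_univ]
  have hEucard : ∀ u ∈ E, (E.erase u).card = n - 2 := by
    intro u hu
    rw [card_erase_of_mem hu, hEcard]
    omega
  -- indicator notation
  set d : V → V → ℕ := fun x y => if H.Adj x y then 1 else 0 with hd
  have hdsymm : ∀ x y, d x y = d y x := by
    intro x y; simp only [hd, SimpleGraph.adj_comm]
  have hdself : ∀ x, d x x = 0 := by
    intro x; simp [hd]
  have hdsq : ∀ x y, d x y * d x y = d x y := by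
    intro x y; simp only [hd]; split <;> simp
  have hdeg : ∀ x : V, (∑ w, d x w) = r := by
    intro x
    have : (univ.filter (fun w => H.Adj x w)).card = r := by
      rw [← SimpleGraph.neighborFinset_eq_filter]
      exact hreg x
    rw [← this, Finset.card_filter]
  have sumE : ∀ x, (∑ w ∈ E, d x w) + d x v = r := by
    intro x
    rw [hEdef, Finset.sum_erase_add _ _ (mem_univ v)]
    exact hdeg x
  have sumEu : ∀ x, ∀ u ∈ E, (∑ w ∈ E.erase u, d x w) + d x u + d x v = r := by
    intro x u hu
    rw [Finset.sum_erase_add _ _ hu]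
    exact sumE x
  -- indicator for triangles
  set f : SimpleGraph V → V → V → ℕ :=
    fun K u w => if K.Adj v u ∧ K.Adj v w ∧ K.Adj u w then 1 else 0 with hf
  -- pointwise identity
  have key_pt : ∀ u ∈ E, ∀ w ∈ E.erase u,
      f H u w + f Hᶜ u w + (d v u + d v w + d u w)
      = 1 + (d v u * d v w + d v u * d u w + d v w * d u w) := by
    intro u hu w hw
    have h1 : u ≠ v := (mem_erase.1 hu).1
    have h2 : w ≠ v := (mem_erase.1 (mem_of_mem_erase hw)).1
    have h3 : w ≠ u := (mem_erase.1 hw).1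
    simp only [hf, SimpleGraph.compl_adj, hd]
    by_cases a : H.Adj v u <;> by_cases b : H.Adj v w <;> by_cases c : H.Adj u w <;>
      simp [a, b, c, h1.symm, h2.symm, h3.symm]
  have main : (∑ u ∈ E, ∑ w ∈ E.erase u,
        (f H u w + f Hᶜ u w + (d v u + d v w + d u w)))
      = ∑ u ∈ E, ∑ w ∈ E.erase u,
        (1 + (d v u * d v w + d v u * d u w + d v w * d u w)) := by
    refine Finset.sum_congr rfl fun u hu => Finset.sum_congr rfl fun w hw => ?_
    exact key_pt u hu w hw
  -- triangle counts as sums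
  have hA : ∀ (K : SimpleGraph V),
      (∑ u ∈ E, ∑ w ∈ E.erase u, f K u w) = 2 * triangleDegree K v := by
    intro K
    have hcf : ((univ : Finset (V × V)).filter
          (fun p => K.Adj v p.1 ∧ K.Adj v p.2 ∧ K.Adj p.1 p.2)).card
        = ∑ u : V, ∑ w : V, f K u w := by
      rw [Finset.card_filter, Fintype.sum_prod_type]
    rw [two_mul_tri K v, hcf]
    have houter : ∀ u : V,
        (∑ w, f K u w)
          = (if u ∈ E then ∑ w ∈ E.erase u, f K u w else 0) := by
      intro u
      by_cases hu : u ∈ E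
      · simp only [hu, if_pos]
        rw [← Finset.sum_erase_add (univ : Finset V) _ (mem_univ v),
          ← Finset.sum_erase_add ((univ : Finset V).erase v) _ (by
            rw [← hEdef]; exact hu)]
        have hz1 : f K u v = 0 := by simp [hf, K.irrefl]
        have hz2 : f K u u = 0 := by simp [hf, K.irrefl]
        rw [← hEdef] at *
        omega
      · have huv : u = v := by
          by_contra h
          exact hu (mem_erase.2 ⟨h, mem_univ u⟩)
        rw [if_neg hu, huv]
        simp [hf, K.irrefl]
    rw [Finset.sum_congr rfl (fun u _ => houter u), Finset.sum_ite_mem, Finset.univ_inter]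
  have hAG := hA H
  have hAGc := hA Hᶜ
  -- translate the complement indicator inside `main` to the Hᶜ form
  -- compute the linear sums
  have hsumEdvu : (∑ u ∈ E, d v u) = r := by
    have := sumE v
    rw [hdself v] at this
    omega
  have hL1 : (∑ u ∈ E, ∑ w ∈ E.erase u, d v u) = (n - 2) * r := by
    have h1 : ∀ u ∈ E, (∑ w ∈ E.erase u, d v u) = (n - 2) * d v u := by
      intro u hu
      rw [Finset.sum_const, hEucard u hu, smul_eq_mul]
    rw [Finset.sum_congr rfl h1, ← Finset.mul_sum, hsumEdvu]
  have hL2 : (∑ u ∈ E, ∑ w ∈ E.erase u, d v w) + r = (n - 1) * r := by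
    have hinner : ∀ u ∈ E, (∑ w ∈ E.erase u, d v w) + d v u = r := by
      intro u hu
      have := sumEu v u hu
      rw [hdself v] at this
      omega
    calc (∑ u ∈ E, ∑ w ∈ E.erase u, d v w) + r
        = (∑ u ∈ E, ∑ w ∈ E.erase u, d v w) + (∑ u ∈ E, d v u) := by rw [hsumEdvu]
      _ = ∑ u ∈ E, ((∑ w ∈ E.erase u, d v w) + d v u) := by rw [Finset.sum_add_distrib]
      _ = ∑ u ∈ E, r := Finset.sum_congr rfl hinner
      _ = (n - 1) * r := by rw [Finset.sum_const, hEcard, smul_eq_mul]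
  have hL3 : (∑ u ∈ E, ∑ w ∈ E.erase u, d u w) + r = (n - 1) * r := by
    have hinner : ∀ u ∈ E, (∑ w ∈ E.erase u, d u w) + d v u = r := by
      intro u hu
      have := sumEu u u hu
      rw [hdself u, hdsymm u v] at this
      omega
    calc (∑ u ∈ E, ∑ w ∈ E.erase u, d u w) + r
        = (∑ u ∈ E, ∑ w ∈ E.erase u, d u w) + (∑ u ∈ E, d v u) := by rw [hsumEdvu]
      _ = ∑ u ∈ E, ((∑ w ∈ E.erase u, d u w) + d v u) := by rw [Finset.sum_add_distrib]
      _ = ∑ u ∈ E, r := Finset.sum_congr rfl hinner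
      _ = (n - 1) * r := by rw [Finset.sum_const, hEcard, smul_eq_mul]
  -- product sums
  have hQ1 : (∑ u ∈ E, ∑ w ∈ E.erase u, d v u * d v w) + r = r * r := by
    have hinner : ∀ u ∈ E, (∑ w ∈ E.erase u, d v u * d v w) + d v u = d v u * r := by
      intro u hu
      rw [← Finset.mul_sum]
      have h := sumEu v u hu
      rw [hdself v] at h
      have : d v u * ((∑ w ∈ E.erase u, d v w) + d v u) = d v u * r := by
        rw [show (∑ w ∈ E.erase u, d v w) + d v u = r from by omega]
      rw [mul_add, hdsq] at this
      omega
    calc (∑ u ∈ E, ∑ w ∈ E.erase u, d v u * d v w) + r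
        = (∑ u ∈ E, ∑ w ∈ E.erase u, d v u * d v w) + (∑ u ∈ E, d v u) := by rw [hsumEdvu]
      _ = ∑ u ∈ E, ((∑ w ∈ E.erase u, d v u * d v w) + d v u) := by rw [Finset.sum_add_distrib]
      _ = ∑ u ∈ E, d v u * r := Finset.sum_congr rfl hinner
      _ = r * r := by rw [← Finset.sum_mul, hsumEdvu]
  have hQ2 : (∑ u ∈ E, ∑ w ∈ E.erase u, d v u * d u w) + r = r * r := by
    have hinner : ∀ u ∈ E, (∑ w ∈ E.erase u, d v u * d u w) + d v u = d v u * r := by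
      intro u hu
      rw [← Finset.mul_sum]
      have h := sumEu u u hu
      rw [hdself u, hdsymm u v] at h
      have : d v u * ((∑ w ∈ E.erase u, d u w) + d v u) = d v u * r := by
        rw [show (∑ w ∈ E.erase u, d u w) + d v u = r from by omega]
      rw [mul_add, hdsq] at this
      omega
    calc (∑ u ∈ E, ∑ w ∈ E.erase u, d v u * d u w) + r
        = (∑ u ∈ E, ∑ w ∈ E.erase u, d v u * d u w) + (∑ u ∈ E, d v u) := by rw [hsumEdvu]
      _ = ∑ u ∈ E, ((∑ w ∈ E.erase u, d v u * d u w) + d v u) := by rw [Finset.sum_add_distrib]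
      _ = ∑ u ∈ E, d v u * r := Finset.sum_congr rfl hinner
      _ = r * r := by rw [← Finset.sum_mul, hsumEdvu]
  have hQ3 : (∑ u ∈ E, ∑ w ∈ E.erase u, d v w * d u w) + r = r * r := by
    have hrect : (∑ u ∈ E, ∑ w ∈ E.erase u, d v w * d u w)
        = ∑ u ∈ E, ∑ w ∈ E, d v w * d u w := by
      refine Finset.sum_congr rfl fun u hu => ?_
      rw [← Finset.sum_erase_add E _ hu, hdsymm u u, hdself u, mul_zero, add_zero]
    rw [hrect, Finset.sum_comm]
    have hinner : ∀ w ∈ E, (∑ u ∈ E, d v w * d u w) + d v w = d v w * r := by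
      intro w hw
      rw [← Finset.mul_sum]
      have h : (∑ u ∈ E, d w u) + d w v = r := sumE w
      have hsw : (∑ u ∈ E, d u w) = ∑ u ∈ E, d w u :=
        Finset.sum_congr rfl fun u _ => hdsymm u w
      have : d v w * ((∑ u ∈ E, d u w) + d v w) = d v w * r := by
        rw [hsw, show (∑ u ∈ E, d w u) + d v w = r from by rw [hdsymm v w]; omega]
      rw [mul_add, hdsq] at this
      omega
    calc (∑ w ∈ E, ∑ u ∈ E, d v w * d u w) + r
        = (∑ w ∈ E, ∑ u ∈ E, d v w * d u w) + (∑ w ∈ E, d v w) := by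
          rw [show (∑ w ∈ E, d v w) = r from by have := sumE v; rw [hdself v] at this; omega]
      _ = ∑ w ∈ E, ((∑ u ∈ E, d v w * d u w) + d v w) := by rw [Finset.sum_add_distrib]
      _ = ∑ w ∈ E, d v w * r := Finset.sum_congr rfl hinner
      _ = r * r := by
          rw [← Finset.sum_mul, show (∑ w ∈ E, d v w) = r from by
            have := sumE v; rw [hdself v] at this; omega]
  -- the constant sum
  have hN : (∑ u ∈ E, ∑ w ∈ E.erase u, (1 : ℕ)) = (n - 1) * (n - 2) := by
    have : ∀ u ∈ E, (∑ w ∈ E.erase u, (1 : ℕ)) = n - 2 := by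
      intro u hu
      rw [Finset.sum_const, hEucard u hu, smul_eq_mul, mul_one]
    rw [Finset.sum_congr rfl this, Finset.sum_const, hEcard, smul_eq_mul]
  -- expand main
  simp only [Finset.sum_add_distrib] at main
  rw [hAG, hAGc, hL1, hN] at main
  -- now finish with omega after generalizing products
  set tG := triangleDegree H v
  set tGc := triangleDegree Hᶜ v
  omega
end Aux

open scoped Classical in
/-- The complement of a regular triangle-distinct graph is again triangle-distinct
(and is `(n−1−r)`-regular). -/
theorem compl_triangleDistinct {V : Type*} [Fintype V] (G : SimpleGraph V) (r : ℕ)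
    (hreg : G.IsRegularOfDegree r) (htd : TriangleDistinct G) :
    TriangleDistinct Gᶜ ∧ Gᶜ.IsRegularOfDegree (Fintype.card V - 1 - r) := by
  constructor
  · intro a b hab
    have ea := key_eq G r hreg a
    have eb := key_eq G r hreg b
    apply htd
    show triangleDegree G a = triangleDegree G b
    have hab' : triangleDegree Gᶜ a = triangleDegree Gᶜ b := hab
    omega
  · exact hreg.compl
end
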